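/- With the same setup (G a group, P self-normalizing, Γ ≤ G, g ∈ G), the map Ξ is surjective: if Q is a subgroup such that Q = γ₁Pγ₁⁻¹ and gQg⁻¹ = γ₂⁻¹Pγ₂ for some γ₁, γ₂ ∈ Γ, then y = γ₂gγ₁ lies in P ∩ ΓgΓ and Ξ(Γ_P y Γ_P) = Q. -/

import Mathlib

/-- Conjugated subgroup `g H g⁻¹`. -/
def conjSub {G : Type*} [Group G] (g : G) (H : Subgroup G) : Subgroup G :=
  H.map (MulAut.conj g).toMonoidHom

lemma mem_conjSub {G : Type*} [Group G] {a x : G} {H : Subgroup G} :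
    x ∈ conjSub a H ↔ a⁻¹ * x * a ∈ H := by
  constructor
  · rintro ⟨y, hy, rfl⟩
    simpa [mul_assoc] using hy
  · intro h
    exact ⟨a⁻¹ * x * a, h, by show a * (a⁻¹ * x * a) * a⁻¹ = x; group⟩

lemma conjSub_conjSub {G : Type*} [Group G] (a b : G) (H : Subgroup G) :
    conjSub a (conjSub b H) = conjSub (a * b) H := by
  ext x
  simp only [mem_conjSub, mul_inv_rev, mul_assoc]

/-- Surjectivity of the map `Ξ`: if `Q = γ₁ P γ₁⁻¹` and `g Q g⁻¹ = γ₂⁻¹ P γ₂`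
with `γ₁, γ₂ ∈ Γ`, then `y = γ₂ g γ₁` lies in `P ∩ Γ g Γ` and `Ξ(Γ_P y Γ_P) = Q`. -/
theorem stmt3 {G : Type*} [Group G] (P Γ : Subgroup G) (hP : Subgroup.normalizer (P : Set G) = P)
    (g : G) (Q : Subgroup G) (γ₁ γ₂ : G) (h1 : γ₁ ∈ Γ) (h2 : γ₂ ∈ Γ)
    (hQ : Q = conjSub γ₁ P) (hgQ : conjSub g Q = conjSub γ₂⁻¹ P) :
    γ₂ * g * γ₁ ∈ P ∧ (∃ a ∈ Γ, ∃ b ∈ Γ, γ₂ * g * γ₁ = a * g * b) ∧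
      conjSub γ₁ P = Q := by
  have key : conjSub (γ₂ * g * γ₁) P = P := by
    rw [← conjSub_conjSub, ← conjSub_conjSub, ← hQ, hgQ, conjSub_conjSub]
    ext x
    simp [mem_conjSub]
  refine ⟨?_, ⟨γ₂, h2, γ₁, h1, rfl⟩, hQ.symm⟩
  rw [← hP, Subgroup.mem_normalizer_iff]
  intro h
  constructor
  · intro hh
    have : γ₂ * g * γ₁ * h * (γ₂ * g * γ₁)⁻¹ ∈ conjSub (γ₂ * g * γ₁) P := by
      rw [mem_conjSub]
      simpa [mul_assoc] using hh
    rwa [key] at this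
  · intro hh
    have := mem_conjSub.mp (key.symm ▸ hh)
    simpa [mul_assoc] using this
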